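/- Let G=(A,B,E) be a bipartite graph with |A| ≥ 2 and |B| ≥ 2. Then B(G) ≥ η(G), where B(G) is the minimum size of a biconnector of G and η(G) = max{ max_{u∈G} D(G,u) + C(G) − 2, M(Λ(G)) + R(Λ(G)) }. -/

import Mathlib

open SimpleGraph

namespace AugBic

noncomputable section

variable {V : Type*}

/-- Two vertices are biconnected: they are in the same connected component and remain so
after the removal of any single edge or any single vertex other than either of them. -/
def BiconnPair (G : SimpleGraph V) (u v : V) : Prop :=
  G.Reachable u v ∧
  (∀ e ∈ G.edgeSet, (G.deleteEdges {e}).Reachable u v) ∧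
  (∀ w : V, ∀ hu : u ≠ w, ∀ hv : v ≠ w,
    (G.induce {x | x ≠ w}).Reachable ⟨u, hu⟩ ⟨v, hv⟩)

/-- A set of vertices is biconnected if every pair of its vertices is biconnected. -/
def BiconnSet (G : SimpleGraph V) (S : Set V) : Prop :=
  ∀ u ∈ S, ∀ v ∈ S, BiconnPair G u v

/-- A block: (the induced subgraph on) a maximal biconnected set of vertices. -/
def IsBlock (G : SimpleGraph V) (S : Set V) : Prop :=
  S.Nonempty ∧ BiconnSet G S ∧ ∀ T : Set V, S ⊆ T → BiconnSet G T → T = S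

/-- A cut vertex: its removal increases the number of connected components. -/
def IsCutVertex (G : SimpleGraph V) (v : V) : Prop :=
  Nat.card G.ConnectedComponent <
    Nat.card ((G.induce {x | x ≠ v}).ConnectedComponent)

/-- A cut edge: its removal increases the number of connected components. -/
def IsCutEdge (G : SimpleGraph V) (e : Sym2 V) : Prop :=
  e ∈ G.edgeSet ∧
    Nat.card G.ConnectedComponent <
      Nat.card ((G.deleteEdges {e}).ConnectedComponent)

/-- A pendant block: a singular block consisting of a vertex of degree 1, or a
nonsingular block containing exactly one cut vertex. -/
def IsPendantBlock (G : SimpleGraph V) (S : Set V) : Prop :=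
  IsBlock G S ∧
    ((∃ v, S = {v} ∧ (G.neighborSet v).ncard = 1) ∨
     (1 < S.ncard ∧ ∃! v, v ∈ S ∧ IsCutVertex G v))

/-- Λ(G): the set of pendant blocks of `G`. -/
def pendantBlocks (G : SimpleGraph V) : Set (Set V) :=
  {S | IsPendantBlock G S}

/-- A block is of type `P` (for `P = A` or `P = B`) if all its noncut vertices lie in `P`. -/
def TypeOnly (G : SimpleGraph V) (P : Set V) (S : Set V) : Prop :=
  ∀ v ∈ S, ¬IsCutVertex G v → v ∈ P

/-- A block is type AB if it has a noncut vertex in `A` and a noncut vertex in `B`. -/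
def TypeAB (G : SimpleGraph V) (A B : Set V) (S : Set V) : Prop :=
  (∃ v ∈ S, ¬IsCutVertex G v ∧ v ∈ A) ∧ (∃ v ∈ S, ¬IsCutVertex G v ∧ v ∈ B)

/-- A legal pair: two distinct pendant blocks, not both of type A and not both of type B. -/
def LegalPair (G : SimpleGraph V) (A B : Set V) (S T : Set V) : Prop :=
  IsPendantBlock G S ∧ IsPendantBlock G T ∧ S ≠ T ∧
  ¬(TypeOnly G A S ∧ TypeOnly G A T) ∧ ¬(TypeOnly G B S ∧ TypeOnly G B T)

/-- A legal edge: a vertex pair in `A × B` that is not an edge of `G`. -/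
def LegalEdge (G : SimpleGraph V) (A B : Set V) (a b : V) : Prop :=
  a ∈ A ∧ b ∈ B ∧ ¬G.Adj a b

/-- A binding edge for a legal pair: a legal edge joining two noncut vertices,
one from each block of the pair. -/
def BindingEdge (G : SimpleGraph V) (A B : Set V) (S T : Set V) (a b : V) : Prop :=
  LegalEdge G A B a b ∧
  ((a ∈ S ∧ ¬IsCutVertex G a ∧ b ∈ T ∧ ¬IsCutVertex G b) ∨
   (a ∈ T ∧ ¬IsCutVertex G a ∧ b ∈ S ∧ ¬IsCutVertex G b))

/-- A legal matching of a set `Λ'` of pendant blocks: a set of legal pairs between elements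
of `Λ'` such that each element of `Λ'` belongs to at most one pair. -/
def IsLegalMatching (G : SimpleGraph V) (A B : Set V) (Λ' : Set (Set V))
    (N : Set (Set V × Set V)) : Prop :=
  (∀ q ∈ N, q.1 ∈ Λ' ∧ q.2 ∈ Λ' ∧ LegalPair G A B q.1 q.2) ∧
  (∀ q ∈ N, ∀ q' ∈ N, q ≠ q' →
    ({q.1, q.2} ∩ {q'.1, q'.2} : Set (Set V)) = ∅)

/-- M(Λ'): the maximum cardinality of a legal matching of `Λ'`. -/
def maxMatching (G : SimpleGraph V) (A B : Set V) (Λ' : Set (Set V)) : ℕ :=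
  sSup {k | ∃ N, IsLegalMatching G A B Λ' N ∧ N.ncard = k}

/-- R(Λ') = |Λ'| − 2·M(Λ'). -/
def Rnum (G : SimpleGraph V) (A B : Set V) (Λ' : Set (Set V)) : ℕ :=
  Λ'.ncard - 2 * maxMatching G A B Λ'

/-- A graph is componentwise biconnected if every connected component is a block. -/
def ComponentwiseBiconnected (G : SimpleGraph V) : Prop :=
  ∀ c : G.ConnectedComponent, IsBlock G c.supp

/-- D(G,u): the number of connected components of X − {u}, where X is the
connected component of G containing u. -/
def Dnum (G : SimpleGraph V) (u : V) : ℕ :=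
  Nat.card ((G.induce {v | G.Reachable u v ∧ v ≠ u}).ConnectedComponent)

/-- C(G): the number of connected components of G that are not blocks. -/
def Cnum (G : SimpleGraph V) : ℕ :=
  Nat.card {c : G.ConnectedComponent // ¬IsBlock G c.supp}

/-- η(G) = max{ max_u D(G,u) + C(G) − 2, M(Λ(G)) + R(Λ(G)) }. -/
def eta (G : SimpleGraph V) (A B : Set V) : ℕ :=
  max ((⨆ u : V, Dnum G u) + Cnum G - 2)
      (maxMatching G A B (pendantBlocks G) + Rnum G A B (pendantBlocks G))

/-- A biconnector: a set of legal edges whose addition makes `G` componentwise biconnected. -/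
def IsBiconnector (G : SimpleGraph V) (A B : Set V) (L : Set (Sym2 V)) : Prop :=
  (∀ e ∈ L, ∃ a b : V, e = s(a, b) ∧ LegalEdge G A B a b) ∧
  ComponentwiseBiconnected (G ⊔ SimpleGraph.fromEdgeSet L)

/-- B(G): the minimum number of edges of a biconnector of `G`. -/
def Bnum (G : SimpleGraph V) (A B : Set V) : ℕ :=
  sInf {k | ∃ L, IsBiconnector G A B L ∧ L.ncard = k}

/-- A connected component is an isolated edge. -/
def IsIsolatedEdgeComp (G : SimpleGraph V) (c : G.ConnectedComponent) : Prop :=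
  ∃ u v : V, G.Adj u v ∧ c.supp = {u, v}

/-- C1(G): the number of components that are neither isolated edges nor blocks. -/
def C1num (G : SimpleGraph V) : ℕ :=
  Nat.card {c : G.ConnectedComponent // ¬IsIsolatedEdgeComp G c ∧ ¬IsBlock G c.supp}

/-- C2(G): the number of isolated-edge components. -/
def C2num (G : SimpleGraph V) : ℕ :=
  Nat.card {c : G.ConnectedComponent // IsIsolatedEdgeComp G c}

/-- C3(G): the number of components that are nonsingular blocks. -/
def C3num (G : SimpleGraph V) : ℕ :=
  Nat.card {c : G.ConnectedComponent // IsBlock G c.supp ∧ 1 < c.supp.ncard}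

/-- A cut vertex `u` is critical if D(G,u) − 1 = M(Λ(G)) + R(Λ(G)). -/
def Critical (G : SimpleGraph V) (A B : Set V) (u : V) : Prop :=
  IsCutVertex G u ∧
    Dnum G u - 1 = maxMatching G A B (pendantBlocks G) + Rnum G A B (pendantBlocks G)

/-- A cut vertex `u` is massive if D(G,u) − 1 > M(Λ(G)) + R(Λ(G)). -/
def Massive (G : SimpleGraph V) (A B : Set V) (u : V) : Prop :=
  IsCutVertex G u ∧
    maxMatching G A B (pendantBlocks G) + Rnum G A B (pendantBlocks G) < Dnum G u - 1

/-- Vertices of the block tree: blocks (b-vertices), cut vertices and cut edges (c-vertices). -/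
inductive BTV (V : Type*) where
  | blk : Set V → BTV V
  | cv : V → BTV V
  | ce : Sym2 V → BTV V

/-- Valid vertices of the block tree of `G`: nonsingular blocks and singular pendant blocks
(b-vertices), together with cut vertices and cut edges (c-vertices). -/
def IsBTVert (G : SimpleGraph V) : BTV V → Prop
  | .blk S => IsBlock G S ∧ (1 < S.ncard ∨ ∃ v, S = {v} ∧ (G.neighborSet v).ncard = 1)
  | .cv v => IsCutVertex G v
  | .ce e => IsCutEdge G e

/-- Adjacency of the block tree: a nonsingular block is joined to each cut vertex in it,
a cut vertex to each cut edge incident to it, and a cut edge to each singular (pendant)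
block containing one of its endpoints. -/
def btAdj (G : SimpleGraph V) : BTV V → BTV V → Prop
  | .blk _, .blk _ => False
  | .blk S, .cv c => 1 < S.ncard ∧ c ∈ S
  | .blk S, .ce e => ∃ v, S = {v} ∧ v ∈ e
  | .cv c, .blk S => 1 < S.ncard ∧ c ∈ S
  | .cv _, .cv _ => False
  | .cv c, .ce e => c ∈ e
  | .ce e, .blk S => ∃ v, S = {v} ∧ v ∈ e
  | .ce e, .cv c => c ∈ e
  | .ce _, .ce _ => False

/-- The vertex type of the block tree Ψ(G). -/
abbrev BTVert (G : SimpleGraph V) := {x : BTV V // IsBTVert G x}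

/-- The block tree Ψ(G). -/
def blockTree (G : SimpleGraph V) : SimpleGraph (BTVert G) where
  Adj x y := btAdj G x.1 y.1
  symm := by
    constructor
    rintro ⟨x, hx⟩ ⟨y, hy⟩ h
    cases x <;> cases y <;> simp_all [btAdj]
  loopless := by
    constructor
    rintro ⟨x, hx⟩ h
    cases x <;> simp_all [btAdj]

/-- Degree of a vertex of the block tree. -/
def btDeg (G : SimpleGraph V) (x : BTVert G) : ℕ :=
  Nat.card ((blockTree G).neighborSet x)

/-- A path is branchless if all its internal vertices have degree two. -/
def Branchless {W : Type*} (T : SimpleGraph W) {x y : W} (p : T.Walk x y) : Prop :=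
  p.IsPath ∧ ∀ z ∈ p.support, z ≠ x → z ≠ y → Nat.card (T.neighborSet z) = 2

/-- A leaf clings to a vertex `v` if there is a branchless path between it and `v`. -/
def Clings {W : Type*} (T : SimpleGraph W) (l v : W) : Prop :=
  ∃ p : T.Walk l v, Branchless T p

/-!
Let `L` be a minimum biconnector and `H = G ⊔ L`. Every pendant block of `G` receives an edge of
`L` at one of its noncut vertices. An edge of `L` joins `A` to `B`, so it serves at most two
pendant blocks, and two blocks served by the same edge form a legal pair; hence
`|Λ(G)| ≤ |L| + M(Λ(G))`, that is `M + R ≤ |L|`.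

For a vertex `u` with component `X`, the `D(G,u)` pieces of `X - u` and the other components of
`G` lying in the component of `u` in `H` stay connected in `H - u`. Only edges of `L` join
different pieces, so there are at least as many of them as pieces, minus one. Every other
component of `G` that is not a block is either left by at least two edges of `L` (a single one
would be a bridge of `H`), each touching only two components, or contains an edge of `L`
(otherwise it would already be biconnected).
Adding up, `D(G,u) + C(G) ≤ |L| + 2`.

Finally, `B(G)` is attained: adding all legal edges gives a supergraph of the complete bipartite
graph on `A` and `B`, which is biconnected since both sides have at least two vertices.
-/

open Function

section Reachability

variable {W : Type*}

lemma reachable_and_mem_of_closed {K K' : SimpleGraph W} {S : Set W}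
    (h : ∀ x y, x ∈ S → K.Adj x y → K'.Adj x y ∧ y ∈ S) {a b : W} (hab : K.Reachable a b)
    (ha : a ∈ S) : K'.Reachable a b ∧ b ∈ S := by
  obtain ⟨p⟩ := hab
  induction p with
  | nil => exact ⟨.rfl, ha⟩
  | cons hadj _ ih =>
    obtain ⟨hK', hS⟩ := h _ _ ha hadj
    exact (ih hS).imp_left hK'.reachable.trans

lemma reachable_map_of_forall_adj {N : Type*} {K : SimpleGraph W} {Q : SimpleGraph N}
    (f : W → N) (hf : ∀ x y, K.Adj x y → Q.Reachable (f x) (f y)) {a b : W}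
    (hab : K.Reachable a b) : Q.Reachable (f a) (f b) := by
  obtain ⟨p⟩ := hab
  induction p with
  | nil => rfl
  | cons hadj _ ih => exact (hf _ _ hadj).trans ih

lemma exists_walk_of_reachable_induce {K : SimpleGraph W} {s : Set W} {a b : s}
    (h : (K.induce s).Reachable a b) : ∃ p : K.Walk a b, ∀ z ∈ p.support, z ∈ s := by
  obtain ⟨q⟩ := h
  refine ⟨q.map (Embedding.induce s).toHom, fun z hz => ?_⟩
  erw [Walk.support_map] at hz
  obtain ⟨z', -, rfl⟩ := List.mem_map.1 hz
  exact z'.2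

lemma reachable_deleteEdges_of_reachable_induce {K : SimpleGraph W} {v a b : W} {e : Sym2 W}
    (hve : v ∈ e) {ha : a ≠ v} {hb : b ≠ v}
    (h : (K.induce {x | x ≠ v}).Reachable ⟨a, ha⟩ ⟨b, hb⟩) : (K.deleteEdges {e}).Reachable a b := by
  obtain ⟨p, hp⟩ := exists_walk_of_reachable_induce h
  refine ⟨p.toDeleteEdges {e} fun e' he' hee' => ?_⟩
  rw [Set.mem_singleton_iff] at hee'
  subst hee'
  induction e' using Sym2.ind with
  | h x y =>
    rcases Sym2.mem_iff.1 hve with rfl | rfl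
    · exact hp _ (p.fst_mem_support_of_mem_edges he') rfl
    · exact hp _ (p.snd_mem_support_of_mem_edges he') rfl

lemma mem_support_of_not_reachable_induce {K : SimpleGraph W} {v x y : W} (p : K.Walk x y)
    {hx : x ≠ v} {hy : y ≠ v} (h : ¬(K.induce {w | w ≠ v}).Reachable ⟨x, hx⟩ ⟨y, hy⟩) :
    v ∈ p.support := by
  by_contra hv
  exact h ⟨p.induce {w | w ≠ v} fun z hz (hzv : z = v) => hv (hzv ▸ hz)⟩

end Reachability

section CutVertex

variable [Finite V] {G : SimpleGraph V} {v : V}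

theorem isCutVertex_iff : IsCutVertex G v ↔ ∃ x y : V, ∃ (hx : x ≠ v) (hy : y ≠ v),
    G.Reachable x y ∧ ¬(G.induce {w | w ≠ v}).Reachable ⟨x, hx⟩ ⟨y, hy⟩ := by
  set φ := ConnectedComponent.map (Embedding.induce (G := G) {w | w ≠ v}).toHom
  have hφ : ∀ x (hx : x ≠ v), φ ((G.induce {w | w ≠ v}).connectedComponentMk ⟨x, hx⟩) =
      G.connectedComponentMk x := fun _ _ => rfl
  constructor
  · intro hcut
    have hφ_inj : ¬Injective φ := fun hinj =>
      (Nat.card_le_card_of_injective φ hinj).not_gt hcut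
    obtain ⟨c₁, c₂, hc, hne⟩ := not_injective_iff.1 hφ_inj
    induction c₁ using ConnectedComponent.ind with | h x =>
    induction c₂ using ConnectedComponent.ind with | h y =>
    exact ⟨x, y, x.2, y.2, ConnectedComponent.exact hc,
      fun h => hne (ConnectedComponent.sound h)⟩
  · classical
    rintro ⟨x, y, hx, hy, ⟨p⟩, hsep⟩
    have hxv : G.Reachable x v := ⟨p.takeUntil v (mem_support_of_not_reachable_induce p hsep)⟩
    have hφ_surj : Surjective φ := by
      intro c
      induction c using ConnectedComponent.ind with | h z =>
      by_cases hz : z = v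
      · exact ⟨_, (hφ x hx).trans (ConnectedComponent.sound (hz ▸ hxv))⟩
      · exact ⟨_, hφ z hz⟩
    have hφ_inj : ¬Injective φ := fun hinj =>
      hsep (ConnectedComponent.exact (hinj ((hφ x hx).trans (ConnectedComponent.sound ⟨p⟩))))
    by_contra hle
    exact hφ_inj (hφ_surj.bijective_of_nat_card_le (not_lt.1 hle)).1

lemma reachable_induce_of_not_isCutVertex (hv : ¬IsCutVertex G v) {x y : V} (hx : x ≠ v)
    (hy : y ≠ v) (h : G.Reachable x y) : (G.induce {w | w ≠ v}).Reachable ⟨x, hx⟩ ⟨y, hy⟩ := by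
  by_contra hsep
  exact hv (isCutVertex_iff.2 ⟨x, y, hx, hy, h, hsep⟩)

lemma exists_not_reachable_induce_of_isCutVertex (hv : IsCutVertex G v) {x : V} (hx : x ≠ v)
    (hxv : G.Reachable x v) :
    ∃ z, ∃ hz : z ≠ v, G.Reachable x z ∧ ¬(G.induce {w | w ≠ v}).Reachable ⟨x, hx⟩ ⟨z, hz⟩ := by
  classical
  obtain ⟨a, b, ha, hb, ⟨p⟩, hsep⟩ := isCutVertex_iff.1 hv
  have hva : G.Reachable v a :=
    ⟨(p.takeUntil v (mem_support_of_not_reachable_induce p hsep)).reverse⟩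
  by_cases hxa : (G.induce {w | w ≠ v}).Reachable ⟨x, hx⟩ ⟨a, ha⟩
  · exact ⟨b, hb, hxv.trans (hva.trans ⟨p⟩), fun hxb => hsep (hxa.symm.trans hxb)⟩
  · exact ⟨a, ha, hxv.trans hva, hxa⟩

lemma not_isCutVertex_of_subsingleton_neighborSet (hv : (G.neighborSet v).Subsingleton) :
    ¬IsCutVertex G v := by
  classical
  rw [isCutVertex_iff]
  rintro ⟨x, y, hx, hy, ⟨p⟩, hsep⟩
  exact (p.bypass_isPath.isTrail.not_mem_support_of_subsingleton_neighborSet hx.symm hy.symm hv)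
    (mem_support_of_not_reachable_induce _ hsep)

end CutVertex

namespace BiconnPair

variable {G K : SimpleGraph V} {u v w : V}

lemma refl (G : SimpleGraph V) (u : V) : BiconnPair G u u :=
  ⟨.rfl, fun _ _ => .rfl, fun _ _ _ => .rfl⟩

lemma symm (h : BiconnPair G u v) : BiconnPair G v u :=
  ⟨h.1.symm, fun e he => (h.2.1 e he).symm, fun w hv hu => (h.2.2 w hu hv).symm⟩

lemma mono (hGK : G ≤ K) (h : BiconnPair G u v) : BiconnPair K u v := by
  refine ⟨h.1.mono hGK, fun e he => ?_, fun w hu hv => (h.2.2 w hu hv).mono ?_⟩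
  · by_cases heG : e ∈ G.edgeSet
    · exact (h.2.1 e heG).mono (deleteEdges_mono hGK)
    · refine h.1.mono fun x y hxy => ?_
      rw [deleteEdges_adj, Set.mem_singleton_iff]
      exact ⟨hGK hxy, fun hxe => heG (hxe ▸ hxy)⟩
  · exact fun x y hxy => hGK hxy

lemma trans_of_not_isCutVertex [Finite V] (hw : ¬IsCutVertex G w) (h₁ : BiconnPair G u w)
    (h₂ : BiconnPair G w v) : BiconnPair G u v := by
  refine ⟨h₁.1.trans h₂.1, fun e he => (h₁.2.1 e he).trans (h₂.2.1 e he), fun x hu hv => ?_⟩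
  by_cases hwx : w = x
  · subst hwx
    exact reachable_induce_of_not_isCutVertex hw hu hv (h₁.1.trans h₂.1)
  · exact (h₁.2.2 x hu hwx).trans (h₂.2.2 x hwx hv)

end BiconnPair

lemma IsBlock.eq_of_mem_of_not_isCutVertex [Finite V] {G : SimpleGraph V} {S T : Set V} {a : V}
    (hS : IsBlock G S) (hT : IsBlock G T) (ha : ¬IsCutVertex G a) (haS : a ∈ S) (haT : a ∈ T) :
    S = T := by
  have hST : BiconnSet G (S ∪ T) := by
    rintro u (hu | hu) v (hv | hv)
    · exact hS.2.1 u hu v hv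
    · exact (hS.2.1 u hu a haS).trans_of_not_isCutVertex ha (hT.2.1 a haT v hv)
    · exact (hT.2.1 u hu a haT).trans_of_not_isCutVertex ha (hS.2.1 a haS v hv)
    · exact hT.2.1 u hu v hv
  exact (hS.2.2 _ Set.subset_union_left hST).symm.trans (hT.2.2 _ Set.subset_union_right hST)

lemma isBlock_supp_of_biconnSet {G : SimpleGraph V} {c : G.ConnectedComponent}
    (hc : BiconnSet G c.supp) : IsBlock G c.supp := by
  obtain ⟨x, rfl⟩ := c.exists_rep
  refine ⟨⟨x, rfl⟩, hc, fun T hxT hT => ?_⟩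
  exact Set.Subset.antisymm (fun y hy => ConnectedComponent.sound (hT y hy x (hxT rfl)).1) hxT

lemma ComponentwiseBiconnected.biconnPair {K : SimpleGraph V} (hK : ComponentwiseBiconnected K)
    {x y : V} (h : K.Reachable x y) : BiconnPair K x y :=
  (hK (K.connectedComponentMk x)).2.1 x rfl y (ConnectedComponent.sound h.symm)

lemma ComponentwiseBiconnected.reachable_induce {K : SimpleGraph V}
    (hK : ComponentwiseBiconnected K) (u : V) (x y : {v | K.Reachable u v ∧ v ≠ u}) :
    (K.induce {v | K.Reachable u v ∧ v ≠ u}).Reachable x y := by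
  classical
  obtain ⟨p, hp⟩ := exists_walk_of_reachable_induce
    ((hK.biconnPair (x.2.1.symm.trans y.2.1)).2.2 u x.2.2 y.2.2)
  have hsupp : ∀ z ∈ p.support, K.Reachable u z ∧ z ≠ u :=
    fun z hz => ⟨x.2.1.trans ⟨p.takeUntil z hz⟩, hp z hz⟩
  exact ⟨p.induce _ hsupp⟩

section PendantBlocks

variable {G H : SimpleGraph V}

lemma exists_adj_not_adj_of_neighborSet_eq (hGH : G ≤ H) (hH : ComponentwiseBiconnected H)
    {v w : V} (hN : G.neighborSet v = {w}) : ∃ z, H.Adj v z ∧ ¬G.Adj v z := by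
  have hvw : G.Adj v w := show w ∈ G.neighborSet v by rw [hN]; rfl
  obtain ⟨p⟩ := (hH.biconnPair (hvw.reachable.mono hGH)).2.1 s(v, w) (hGH hvw)
  cases p with
  | nil => exact absurd rfl hvw.ne
  | @cons _ z _ hvz _ =>
    rw [deleteEdges_adj, Set.mem_singleton_iff] at hvz
    refine ⟨z, hvz.1, fun hG => hvz.2 ?_⟩
    have hzw : z ∈ G.neighborSet v := hG
    rw [hN, Set.mem_singleton_iff] at hzw
    rw [hzw]

variable [Finite V]

/-- As `y` is not a cut vertex, `w` reaches the rest of `P` in `G - y`, hence without the edge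
`yw`; so `insert w P` is biconnected. -/
lemma IsBlock.mem_of_adj_of_not_isCutVertex {P : Set V} (hP : IsBlock G P) (hcard : 1 < P.ncard)
    {y w : V} (hyP : y ∈ P) (hy : ¬IsCutVertex G y) (hyw : G.Adj y w) : w ∈ P := by
  obtain ⟨p, hpP, hpy⟩ := Set.exists_ne_of_one_lt_ncard hcard y
  have hwp : (G.induce {x | x ≠ y}).Reachable ⟨w, hyw.ne'⟩ ⟨p, hpy⟩ :=
    reachable_induce_of_not_isCutVertex hy _ _ (hyw.symm.reachable.trans (hP.2.1 y hyP p hpP).1)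
  have hw : ∀ q ∈ P, BiconnPair G w q := by
    intro q hq
    have hyq := hP.2.1 y hyP q hq
    refine ⟨hyw.symm.reachable.trans hyq.1, fun e he => ?_, fun x hwx hqx => ?_⟩
    · by_cases hye : y ∈ e
      · exact (reachable_deleteEdges_of_reachable_induce hye hwp).trans
          ((hP.2.1 p hpP q hq).2.1 e he)
      · have hwy : (G.deleteEdges {e}).Adj w y := by
          rw [deleteEdges_adj, Set.mem_singleton_iff]
          exact ⟨hyw.symm, fun h => hye (h ▸ Sym2.mem_mk_right w y)⟩
        exact hwy.reachable.trans (hyq.2.1 e he)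
    · by_cases hyx : y = x
      · subst hyx
        exact reachable_induce_of_not_isCutVertex hy hwx hqx (hyw.symm.reachable.trans hyq.1)
      · exact (show (G.induce {z | z ≠ x}).Adj ⟨w, hwx⟩ ⟨y, hyx⟩ from hyw.symm).reachable.trans
          (hyq.2.2 x hyx hqx)
  have hins : BiconnSet G (insert w P) := by
    rintro a (rfl | ha) b (rfl | hb)
    · exact BiconnPair.refl G _
    · exact hw b hb
    · exact (hw a ha).symm
    · exact hP.2.1 a ha b hb
  exact hP.2.2 _ (Set.subset_insert w P) hins ▸ Set.mem_insert w P

/-- A block with a unique cut vertex `c` can only be left through `c` or through an added edge,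
while `G - c` already separates it from the rest of its component. -/
lemma IsPendantBlock.exists_added_edge (hGH : G ≤ H) (hH : ComponentwiseBiconnected H)
    {P : Set V} (hP : IsPendantBlock G P) :
    ∃ z ∈ P, ¬IsCutVertex G z ∧ ∃ y, H.Adj z y ∧ ¬G.Adj z y := by
  obtain ⟨hblk, ⟨v, rfl, hdeg⟩ | ⟨hcard, c, ⟨hcP, hc⟩, huniq⟩⟩ := hP
  · obtain ⟨w, hN⟩ := Set.ncard_eq_one.1 hdeg
    exact ⟨v, rfl, not_isCutVertex_of_subsingleton_neighborSet (hN ▸ Set.subsingleton_singleton),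
      exists_adj_not_adj_of_neighborSet_eq hGH hH hN⟩
  by_contra! hno
  obtain ⟨x, hxP, hxc⟩ := Set.exists_ne_of_one_lt_ncard hcard c
  obtain ⟨z, hzc, hxz, hsep⟩ :=
    exists_not_reachable_induce_of_isCutVertex hc hxc (hblk.2.1 x hxP c hcP).1
  have hstep : ∀ a b : {t : V | t ≠ c}, a.1 ∈ P → (H.induce {t | t ≠ c}).Adj a b →
      (G.induce {t | t ≠ c}).Adj a b ∧ b.1 ∈ P := by
    intro a b haP hab
    have ha : ¬IsCutVertex G a := fun ha => a.2 (huniq a ⟨haP, ha⟩)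
    have hG : G.Adj a b := hno a haP ha b hab
    exact ⟨hG, hblk.mem_of_adj_of_not_isCutVertex hcard haP ha hG⟩
  exact hsep (reachable_and_mem_of_closed (S := {t : {t : V | t ≠ c} | t.1 ∈ P}) hstep
    ((hH.biconnPair (hxz.mono hGH)).2.2 c hxc hzc) hxP).1

end PendantBlocks

section Counting

lemma card_le_ncard_range_add_ncard {α β : Type*} [Finite α] (f : α → β) (p : α → Prop)
    (hf : ∀ a b, f a = f b → (p a ↔ p b) → a = b) :
    Nat.card α ≤ (Set.range f).ncard + {q : α × α | p q.1 ∧ ¬p q.2 ∧ f q.1 = f q.2}.ncard := by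
  have h₁ : Set.InjOn f {a | p a} := fun a ha b hb h => hf a b h (iff_of_true ha hb)
  have h₂ : Set.InjOn f {a | p a}ᶜ := fun a ha b hb h => hf a b h (iff_of_false ha hb)
  have hinter : f '' {a | p a} ∩ f '' {a | p a}ᶜ ⊆
      (fun q : α × α => f q.1) '' {q | p q.1 ∧ ¬p q.2 ∧ f q.1 = f q.2} := by
    rintro _ ⟨⟨a, ha, rfl⟩, b, hb, hab⟩
    exact ⟨(a, b), ⟨ha, hb, hab.symm⟩, rfl⟩
  calc Nat.card α = (f '' {a | p a}).ncard + (f '' {a | p a}ᶜ).ncard := by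
        rw [h₁.ncard_image, h₂.ncard_image, Set.ncard_add_ncard_compl]
    _ = (f '' {a | p a} ∪ f '' {a | p a}ᶜ).ncard + (f '' {a | p a} ∩ f '' {a | p a}ᶜ).ncard :=
        (Set.ncard_union_add_ncard_inter _ _).symm
    _ ≤ _ := add_le_add (Set.ncard_le_ncard (by rw [← Set.image_union, Set.union_compl_self,
        Set.image_univ])) ((Set.ncard_le_ncard hinter).trans Set.ncard_image_le)

lemma ncard_mul_le_ncard_mul {α β : Type*} [Finite α] [Finite β] (s : Set α) (t : Set β)
    (r : α → β → Prop) {m n : ℕ} (hm : ∀ a ∈ s, m ≤ {b ∈ t | r a b}.ncard)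
    (hn : ∀ b ∈ t, {a ∈ s | r a b}.ncard ≤ n) : s.ncard * m ≤ t.ncard * n := by
  classical
  have := Fintype.ofFinite α
  have := Fintype.ofFinite β
  simp only [Set.ncard_eq_toFinset_card'] at hm hn ⊢
  refine Finset.card_mul_le_card_mul r (fun a ha => ?_) (fun b hb => ?_)
  · convert hm a (by simpa using ha) using 2
    ext; simp [Finset.mem_bipartiteAbove]
  · convert hn b (by simpa using hb) using 2
    ext; simp [Finset.mem_bipartiteBelow]

/-- Contracting the `π`-fibres of a connected graph `H` yields a connected graph whose edges all
come from `H.edgeSet \ G.edgeSet`, hence a graph with at least `Nat.card N - 1` such edges. -/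
lemma card_le_ncard_edgeSet_sdiff_add_one {W N : Type*} [Finite W] {G H : SimpleGraph W}
    (hH : H.Preconnected) (π : W → N) (hπ : Surjective π) (hG : ∀ x y, G.Adj x y → π x = π y) :
    Nat.card N ≤ (H.edgeSet \ G.edgeSet).ncard + 1 := by
  have : Finite N := Finite.of_surjective π hπ
  set Q := SimpleGraph.fromEdgeSet (Sym2.map π '' (H.edgeSet \ G.edgeSet))
  have hQ : Q.Preconnected := by
    intro n m
    obtain ⟨x, rfl⟩ := hπ n
    obtain ⟨y, rfl⟩ := hπ m
    refine reachable_map_of_forall_adj π (fun a b hab => ?_) (hH x y)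
    by_cases hGab : G.Adj a b
    · rw [hG a b hGab]
    by_cases hπab : π a = π b
    · rw [hπab]
    have hQab : Q.Adj (π a) (π b) := (fromEdgeSet_adj _).2 ⟨⟨s(a, b), ⟨hab, hGab⟩, rfl⟩, hπab⟩
    exact hQab.reachable
  rcases isEmpty_or_nonempty N with _ | _
  · simp
  have hQc : Q.Connected := ⟨hQ⟩
  calc Nat.card N ≤ Nat.card Q.edgeSet + 1 := hQc.card_vert_le_card_edgeSet_add_one
    _ ≤ _ := by
      rw [Nat.card_coe_set_eq, edgeSet_fromEdgeSet]
      gcongr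
      exact (Set.ncard_le_ncard Set.sdiff_subset).trans Set.ncard_image_le

end Counting

section Matching

variable {G H : SimpleGraph V} {A B : Set V}

lemma isLegalMatching_of_injective {β : Type*} (hdisj : Disjoint A B)
    (z : pendantBlocks G → V) (hzP : ∀ P, z P ∈ P.1) (hz : ∀ P, ¬IsCutVertex G (z P))
    (f : pendantBlocks G → β) (hf : ∀ P Q, f P = f Q → (z P ∈ A ↔ z Q ∈ A) → P = Q) :
    IsLegalMatching G A B (pendantBlocks G) ((fun q => (q.1.1, q.2.1)) ''
      {q : pendantBlocks G × pendantBlocks G | z q.1 ∈ A ∧ z q.2 ∉ A ∧ f q.1 = f q.2}) := by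
  constructor
  · rintro _ ⟨⟨P, Q⟩, ⟨hPA, hQA, -⟩, rfl⟩
    refine ⟨P.2, Q.2, P.2, Q.2, fun h => hQA (Subtype.ext h ▸ hPA), fun h => hQA ?_,
      fun h => Set.disjoint_left.1 hdisj hPA ?_⟩
    exacts [h.2 _ (hzP Q) (hz Q), h.1 _ (hzP P) (hz P)]
  · rintro _ ⟨⟨P, Q⟩, ⟨hPA, hQA, hPQ⟩, rfl⟩ _ ⟨⟨P', Q'⟩, ⟨hPA', hQA', hPQ'⟩, rfl⟩ hne
    refine Set.eq_empty_iff_forall_notMem.2 fun X ⟨hX, hX'⟩ => hne ?_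
    have hf' : f P = f P' := by
      simp only [Set.mem_insert_iff, Set.mem_singleton_iff] at hX hX'
      obtain ⟨R, hR, R', hR', rfl⟩ : ∃ R, f R = f P ∧ ∃ R', f R' = f P' ∧ R = R' := by
        rcases hX with rfl | rfl <;> rcases hX' with h | h
        exacts [⟨P, rfl, P', rfl, Subtype.ext h⟩, ⟨P, rfl, Q', hPQ'.symm, Subtype.ext h⟩,
          ⟨Q, hPQ.symm, P', rfl, Subtype.ext h⟩, ⟨Q, hPQ.symm, Q', hPQ'.symm, Subtype.ext h⟩]
      exact hR.symm.trans hR'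
    rw [hf P P' hf' (iff_of_true hPA hPA'),
      hf Q Q' (hPQ.symm.trans (hf'.trans hPQ')) (iff_of_false hQA hQA')]

variable [Finite V] {Λ' : Set (Set V)}

lemma IsLegalMatching.two_mul_ncard_le {N : Set (Set V × Set V)}
    (hN : IsLegalMatching G A B Λ' N) : 2 * N.ncard ≤ Λ'.ncard := by
  have hmeet : ∀ q ∈ N, ∀ q' ∈ N, ∀ X, (X = q.1 ∨ X = q.2) → (X = q'.1 ∨ X = q'.2) → q = q' := by
    intro q hq q' hq' X hX hX'
    by_contra hne
    exact (Set.eq_empty_iff_forall_notMem.1 (hN.2 q hq q' hq' hne)) X ⟨hX, hX'⟩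
  have h₁ : Set.InjOn Prod.fst N := fun q hq q' hq' h =>
    hmeet q hq q' hq' q.1 (.inl rfl) (.inl h)
  have h₂ : Set.InjOn Prod.snd N := fun q hq q' hq' h =>
    hmeet q hq q' hq' q.2 (.inr rfl) (.inr h)
  have hdisj : Disjoint (Prod.fst '' N) (Prod.snd '' N) := by
    rw [Set.disjoint_left]
    rintro _ ⟨q, hq, rfl⟩ ⟨q', hq', hqq'⟩
    obtain rfl := hmeet q hq q' hq' q.1 (.inl rfl) (.inr hqq'.symm)
    exact (hN.1 q hq).2.2.2.2.1 hqq'.symm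
  have hsub : Prod.fst '' N ∪ Prod.snd '' N ⊆ Λ' := by
    rintro _ (⟨q, hq, rfl⟩ | ⟨q, hq, rfl⟩)
    exacts [(hN.1 q hq).1, (hN.1 q hq).2.1]
  calc 2 * N.ncard = (Prod.fst '' N).ncard + (Prod.snd '' N).ncard := by
        rw [h₁.ncard_image, h₂.ncard_image]; ring
    _ = (Prod.fst '' N ∪ Prod.snd '' N).ncard := (Set.ncard_union_eq hdisj).symm
    _ ≤ Λ'.ncard := Set.ncard_le_ncard hsub

lemma bddAbove_ncard_legalMatching :
    BddAbove {k | ∃ N, IsLegalMatching G A B Λ' N ∧ N.ncard = k} :=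
  ⟨Λ'.ncard, by rintro _ ⟨N, hN, rfl⟩; linarith [hN.two_mul_ncard_le]⟩

lemma IsLegalMatching.ncard_le_maxMatching {N : Set (Set V × Set V)}
    (hN : IsLegalMatching G A B Λ' N) : N.ncard ≤ maxMatching G A B Λ' :=
  le_csSup bddAbove_ncard_legalMatching ⟨N, hN, rfl⟩

lemma two_mul_maxMatching_le : 2 * maxMatching G A B Λ' ≤ Λ'.ncard := by
  have hne : {k | ∃ N, IsLegalMatching G A B Λ' N ∧ N.ncard = k}.Nonempty :=
    ⟨0, ∅, ⟨by simp, by simp⟩, Set.ncard_empty _⟩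
  obtain ⟨N, hN, hcard⟩ := Nat.sSup_mem hne bddAbove_ncard_legalMatching
  rw [maxMatching, ← hcard]
  exact hN.two_mul_ncard_le

lemma ncard_pendantBlocks_le (hGH : G ≤ H) (hH : ComponentwiseBiconnected H)
    (hdisj : Disjoint A B) (hAB : ∀ e ∈ H.edgeSet \ G.edgeSet, ∃ a ∈ A, ∃ b ∈ B, e = s(a, b)) :
    (pendantBlocks G).ncard ≤
      (H.edgeSet \ G.edgeSet).ncard + maxMatching G A B (pendantBlocks G) := by
  choose z hzP hz y hzy hG using fun P : pendantBlocks G => P.2.exists_added_edge hGH hH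
  set f : pendantBlocks G → Sym2 V := fun P => s(z P, y P)
  have hfE : ∀ P, f P ∈ H.edgeSet \ G.edgeSet := fun P => ⟨hzy P, hG P⟩
  have hside : ∀ P, z P ∈ A ↔ y P ∉ A := by
    intro P
    obtain ⟨a, ha, b, hb, hab⟩ := hAB _ (hfE P)
    rcases Sym2.eq_iff.1 hab with ⟨rfl, rfl⟩ | ⟨rfl, rfl⟩
    · exact iff_of_true ha (Set.disjoint_right.1 hdisj hb)
    · exact iff_of_false (Set.disjoint_right.1 hdisj hb) (not_not.2 ha)
  have hf : ∀ P Q, f P = f Q → (z P ∈ A ↔ z Q ∈ A) → P = Q := by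
    intro P Q hPQ hA
    have hzQ : z Q ∈ f P := by rw [hPQ]; exact Sym2.mem_mk_left _ _
    have hzz : z Q = z P := by
      rcases Sym2.mem_iff.1 hzQ with h | h
      · exact h
      · have := hside P
        rw [h] at hA
        tauto
    exact Subtype.ext (P.2.1.eq_of_mem_of_not_isCutVertex Q.2.1 (hz P) (hzP P) (hzz ▸ hzP Q))
  have hM := (isLegalMatching_of_injective hdisj z hzP hz f hf).ncard_le_maxMatching
  rw [Set.ncard_image_of_injective _ fun (q q' : pendantBlocks G × pendantBlocks G) h =>
    Prod.ext (Subtype.ext (congrArg Prod.fst h)) (Subtype.ext (congrArg Prod.snd h))] at hM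
  calc (pendantBlocks G).ncard = Nat.card (pendantBlocks G) := (Nat.card_coe_set_eq _).symm
    _ ≤ (Set.range f).ncard + _ := card_le_ncard_range_add_ncard f (fun P => z P ∈ A) hf
    _ ≤ _ := add_le_add (Set.ncard_le_ncard (Set.range_subset_iff.2 hfE)) hM

theorem maxMatching_add_Rnum_le (hGH : G ≤ H) (hH : ComponentwiseBiconnected H)
    (hdisj : Disjoint A B) (hAB : ∀ e ∈ H.edgeSet \ G.edgeSet, ∃ a ∈ A, ∃ b ∈ B, e = s(a, b)) :
    maxMatching G A B (pendantBlocks G) + Rnum G A B (pendantBlocks G) ≤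
      (H.edgeSet \ G.edgeSet).ncard := by
  have h₁ := ncard_pendantBlocks_le hGH hH hdisj hAB
  have h₂ := two_mul_maxMatching_le (G := G) (A := A) (B := B) (Λ' := pendantBlocks G)
  rw [Rnum]
  omega

end Matching

section ComponentCount

variable {G H : SimpleGraph V}

lemma exists_ne_added_edge_of_crossing (hH : ComponentwiseBiconnected H) {a b : V}
    (hab : H.Adj a b) (hcab : G.connectedComponentMk b ≠ G.connectedComponentMk a) :
    ∃ x y, s(x, y) ∈ H.edgeSet \ G.edgeSet ∧ s(x, y) ≠ s(a, b) ∧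
      G.connectedComponentMk x = G.connectedComponentMk a ∧
      G.connectedComponentMk y ≠ G.connectedComponentMk a := by
  obtain ⟨p⟩ := (hH.biconnPair hab.reachable).2.1 s(a, b) hab
  obtain ⟨d, -, hd₁, hd₂⟩ := p.exists_boundary_dart (G.connectedComponentMk a).supp rfl hcab
  have hd := d.adj
  rw [deleteEdges_adj, Set.mem_singleton_iff] at hd
  exact ⟨d.fst, d.snd, ⟨hd.1, fun hG => hd₂ ((ConnectedComponent.connectedComponentMk_eq_of_adj
    hG).symm.trans hd₁)⟩, hd.2, hd₁, hd₂⟩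

lemma exists_added_edge_of_not_isBlock (hGH : G ≤ H) (hH : ComponentwiseBiconnected H)
    {c : G.ConnectedComponent} (hc : ¬IsBlock G c.supp)
    (hclosed : ∀ x y, H.Adj x y → x ∈ c.supp → y ∈ c.supp) :
    ∃ x y, H.Adj x y ∧ ¬G.Adj x y ∧ x ∈ c.supp := by
  by_contra! hno
  have hstep : ∀ x y, x ∈ c.supp → H.Adj x y → G.Adj x y ∧ y ∈ c.supp :=
    fun x y hx hxy => ⟨not_not.1 fun h => hno x y hxy h hx, hclosed x y hxy hx⟩
  refine hc (isBlock_supp_of_biconnSet fun u hu v hv => ?_)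
  have huv := hH.biconnPair ((ConnectedComponent.exact (hu.trans hv.symm)).mono hGH)
  refine ⟨(reachable_and_mem_of_closed hstep huv.1 hu).1, fun e he => ?_, fun w hw hw' => ?_⟩
  · refine (reachable_and_mem_of_closed (fun x y hx hxy => ?_) (huv.2.1 e (edgeSet_mono hGH he))
      hu).1
    rw [deleteEdges_adj] at hxy ⊢
    exact ⟨⟨(hstep x y hx hxy.1).1, hxy.2⟩, (hstep x y hx hxy.1).2⟩
  · exact (reachable_and_mem_of_closed (S := {t : {t : V | t ≠ w} | t.1 ∈ c.supp})
      (fun x y hx hxy => hstep x y hx hxy) (huv.2.2 w hw hw') hu).1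

variable [Finite V]

lemma ncard_crossed_components_le (hH : ComponentwiseBiconnected H) (S : Set V) :
    {c : G.ConnectedComponent | c.supp ⊆ S ∧ ∃ x y, H.Adj x y ∧
      G.connectedComponentMk x = c ∧ G.connectedComponentMk y ≠ c}.ncard ≤
    {e ∈ H.edgeSet \ G.edgeSet | (∃ x ∈ e, x ∈ S) ∧
      ∃ x ∈ e, ∃ y ∈ e, G.connectedComponentMk x ≠ G.connectedComponentMk y}.ncard := by
  refine Nat.le_of_mul_le_mul_right (c := 2) (ncard_mul_le_ncard_mul _ _
    (fun (c : G.ConnectedComponent) (e : Sym2 V) => ∃ x ∈ e, G.connectedComponentMk x = c) ?_ ?_)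
    (by norm_num)
  · rintro c ⟨hcS, a, b, hab, rfl, hb⟩
    have hmem : ∀ x y, s(x, y) ∈ H.edgeSet \ G.edgeSet →
        G.connectedComponentMk x = G.connectedComponentMk a →
        G.connectedComponentMk y ≠ G.connectedComponentMk a →
        (s(x, y) ∈ H.edgeSet \ G.edgeSet ∧ (∃ z ∈ s(x, y), z ∈ S) ∧ ∃ z ∈ s(x, y), ∃ w ∈ s(x, y),
          G.connectedComponentMk z ≠ G.connectedComponentMk w) ∧
        ∃ z ∈ s(x, y), G.connectedComponentMk z = G.connectedComponentMk a :=
      fun x y hxy hx hy => ⟨⟨hxy, ⟨x, Sym2.mem_mk_left x y, hcS hx⟩, x, Sym2.mem_mk_left x y, y,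
        Sym2.mem_mk_right x y, fun h => hy (h ▸ hx)⟩, x, Sym2.mem_mk_left x y, hx⟩
    have hab' : s(a, b) ∈ H.edgeSet \ G.edgeSet :=
      ⟨hab, fun hG => hb (ConnectedComponent.connectedComponentMk_eq_of_adj hG).symm⟩
    obtain ⟨x, y, hxy, hne, hx, hy⟩ := exists_ne_added_edge_of_crossing hH hab hb
    refine (Set.ncard_pair hne.symm).symm.le.trans (Set.ncard_le_ncard ?_)
    rintro e (rfl | rfl)
    exacts [hmem a b hab' rfl hb, hmem x y hxy hx hy]
  · rintro e -
    induction e using Sym2.ind with | h a b =>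
    calc _ ≤ ({G.connectedComponentMk a, G.connectedComponentMk b} :
          Set G.ConnectedComponent).ncard := Set.ncard_le_ncard (by
            rintro c ⟨-, x, hx, rfl⟩
            rcases Sym2.mem_iff.1 hx with rfl | rfl <;> simp)
      _ ≤ 2 := (Set.ncard_insert_le _ _).trans (by rw [Set.ncard_singleton])

lemma ncard_uncrossed_components_le (hGH : G ≤ H) (hH : ComponentwiseBiconnected H) (S : Set V) :
    {c : G.ConnectedComponent | c.supp ⊆ S ∧ ¬IsBlock G c.supp ∧ ¬∃ x y, H.Adj x y ∧
      G.connectedComponentMk x = c ∧ G.connectedComponentMk y ≠ c}.ncard ≤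
    {e ∈ H.edgeSet \ G.edgeSet | (∃ x ∈ e, x ∈ S) ∧
      ∀ x ∈ e, ∀ y ∈ e, G.connectedComponentMk x = G.connectedComponentMk y}.ncard := by
  refine Nat.le_of_mul_le_mul_right (c := 1) (ncard_mul_le_ncard_mul _ _
    (fun (c : G.ConnectedComponent) (e : Sym2 V) => ∃ x ∈ e, G.connectedComponentMk x = c) ?_ ?_)
    (by norm_num)
  · rintro c ⟨hcS, hc, hcross⟩
    have hclosed : ∀ x y, H.Adj x y → x ∈ c.supp → y ∈ c.supp :=
      fun x y hxy hx => not_not.1 fun hy => hcross ⟨x, y, hxy, hx, hy⟩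
    obtain ⟨x, y, hxy, hG, hx⟩ := exists_added_edge_of_not_isBlock hGH hH hc hclosed
    have hy : y ∈ c.supp := hclosed x y hxy hx
    refine (Set.ncard_pos).2 ⟨s(x, y), ⟨⟨hxy, hG⟩, ⟨x, Sym2.mem_mk_left x y, hcS hx⟩, ?_⟩,
      x, Sym2.mem_mk_left x y, hx⟩
    intro a ha b hb
    rcases Sym2.mem_iff.1 ha with rfl | rfl <;> rcases Sym2.mem_iff.1 hb with rfl | rfl <;>
      simp only [ConnectedComponent.mem_supp_iff] at hx hy <;> simp [hx, hy]
  · rintro e ⟨-, -, hsame⟩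
    induction e using Sym2.ind with | h a b =>
    refine (Set.ncard_le_ncard (t := {G.connectedComponentMk a}) ?_).trans
      (Set.ncard_singleton _).le
    rintro c ⟨-, x, hx, rfl⟩
    exact hsame x hx a (Sym2.mem_mk_left a b)

lemma Dnum_add_ncard_merged_le (hGH : G ≤ H) (hH : ComponentwiseBiconnected H) (u : V) :
    Dnum G u + {c : G.ConnectedComponent | c ≠ G.connectedComponentMk u ∧
      ∃ x, G.connectedComponentMk x = c ∧ H.Reachable u x}.ncard ≤
    {e ∈ H.edgeSet \ G.edgeSet | ∀ x ∈ e, H.Reachable u x ∧ x ≠ u}.ncard + 1 := by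
  classical
  set X := {v | G.Reachable u v ∧ v ≠ u}
  set W := {v | H.Reachable u v ∧ v ≠ u}
  set T := {c : G.ConnectedComponent | c ≠ G.connectedComponentMk u ∧
      ∃ x, G.connectedComponentMk x = c ∧ H.Reachable u x}
  have hT : ∀ x : W, ¬G.Reachable u x → G.connectedComponentMk x ∈ T := fun x hx =>
    ⟨fun h => hx (ConnectedComponent.exact h).symm, x, rfl, x.2.1⟩
  let π : W → (G.induce X).ConnectedComponent ⊕ T := fun x =>
    if hx : G.Reachable u x then .inl ((G.induce X).connectedComponentMk ⟨x, hx, x.2.2⟩)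
    else .inr ⟨_, hT x hx⟩
  have hπ : Surjective π := by
    rintro (d | ⟨c, hcu, x, rfl, hux⟩)
    · induction d using ConnectedComponent.ind with | h x =>
      exact ⟨⟨x, x.2.1.mono hGH, x.2.2⟩, dif_pos x.2.1⟩
    · have hx : ¬G.Reachable u x := fun h => hcu (ConnectedComponent.sound h.symm)
      exact ⟨⟨x, hux, fun h => hx (h ▸ .rfl)⟩, dif_neg hx⟩
  have hπG : ∀ x y, (G.induce W).Adj x y → π x = π y := by
    intro x y hxy
    have hxy' : G.Adj x y := hxy
    by_cases hx : G.Reachable u x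
    · have hy : G.Reachable u y := hx.trans hxy'.reachable
      simp only [π, dif_pos hx, dif_pos hy, Sum.inl.injEq]
      exact ConnectedComponent.sound (Adj.reachable (show (G.induce X).Adj ⟨x, hx, x.2.2⟩
        ⟨y, hy, y.2.2⟩ from hxy'))
    · have hy : ¬G.Reachable u y := fun hy => hx (hy.trans hxy'.symm.reachable)
      simp only [π, dif_neg hx, dif_neg hy, Sum.inr.injEq, Subtype.mk.injEq]
      exact ConnectedComponent.sound hxy'.reachable
  have hcard := card_le_ncard_edgeSet_sdiff_add_one (hH.reachable_induce u) π hπ hπG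
  rw [Nat.card_sum, Nat.card_coe_set_eq] at hcard
  refine hcard.trans (Nat.add_le_add_right ?_ 1)
  rw [← Set.ncard_image_of_injective _ (Sym2.map.injective Subtype.val_injective)]
  refine Set.ncard_le_ncard ?_
  rintro _ ⟨e, ⟨he, hGe⟩, rfl⟩
  induction e using Sym2.ind with | h x y =>
  refine ⟨⟨he, hGe⟩, fun z hz => ?_⟩
  rcases Sym2.mem_iff.1 (by simpa using hz) with rfl | rfl
  exacts [x.2, y.2]

lemma ncard_not_isBlock_le (hGH : G ≤ H) (hH : ComponentwiseBiconnected H) (S : Set V) :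
    {c : G.ConnectedComponent | c.supp ⊆ S ∧ ¬IsBlock G c.supp}.ncard ≤
      {e ∈ H.edgeSet \ G.edgeSet | ∃ x ∈ e, x ∈ S}.ncard := by
  set crossed := {c : G.ConnectedComponent | c.supp ⊆ S ∧ ∃ x y, H.Adj x y ∧
    G.connectedComponentMk x = c ∧ G.connectedComponentMk y ≠ c}
  set inner := {c : G.ConnectedComponent | c.supp ⊆ S ∧ ¬IsBlock G c.supp ∧
    ¬∃ x y, H.Adj x y ∧ G.connectedComponentMk x = c ∧ G.connectedComponentMk y ≠ c}
  set Ecrossed := {e ∈ H.edgeSet \ G.edgeSet | (∃ x ∈ e, x ∈ S) ∧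
    ∃ x ∈ e, ∃ y ∈ e, G.connectedComponentMk x ≠ G.connectedComponentMk y}
  set Einner := {e ∈ H.edgeSet \ G.edgeSet | (∃ x ∈ e, x ∈ S) ∧
    ∀ x ∈ e, ∀ y ∈ e, G.connectedComponentMk x = G.connectedComponentMk y}
  have hsub : {c : G.ConnectedComponent | c.supp ⊆ S ∧ ¬IsBlock G c.supp} ⊆ crossed ∪ inner :=
    fun c ⟨hcS, hc⟩ => (em (c ∈ crossed)).elim .inl fun hcr => .inr ⟨hcS, hc, fun h => hcr ⟨hcS, h⟩⟩
  have hdisj : Disjoint Ecrossed Einner := Set.disjoint_left.2 fun e he he' =>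
    have ⟨_, _, x, hx, y, hy, hxy⟩ := he
    hxy (he'.2.2 x hx y hy)
  calc _ ≤ crossed.ncard + inner.ncard := (Set.ncard_le_ncard hsub).trans (Set.ncard_union_le _ _)
    _ ≤ Ecrossed.ncard + Einner.ncard := add_le_add (ncard_crossed_components_le hH S)
        (ncard_uncrossed_components_le hGH hH S)
    _ = (Ecrossed ∪ Einner).ncard := (Set.ncard_union_eq hdisj).symm
    _ ≤ {e ∈ H.edgeSet \ G.edgeSet | ∃ x ∈ e, x ∈ S}.ncard :=
      Set.ncard_le_ncard (Set.union_subset (fun e he => ⟨he.1, he.2.1⟩) fun e he => ⟨he.1, he.2.1⟩)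

theorem Dnum_add_Cnum_le (hGH : G ≤ H) (hH : ComponentwiseBiconnected H) (u : V) :
    Dnum G u + Cnum G ≤ (H.edgeSet \ G.edgeSet).ncard + 2 := by
  set S : Set V := {x | ¬H.Reachable u x}
  set inY : Set G.ConnectedComponent := {c | c ≠ G.connectedComponentMk u ∧
    ∃ x, G.connectedComponentMk x = c ∧ H.Reachable u x}
  set outside := {c : G.ConnectedComponent | c.supp ⊆ S ∧ ¬IsBlock G c.supp}
  set EY := {e ∈ H.edgeSet \ G.edgeSet | ∀ x ∈ e, H.Reachable u x ∧ x ≠ u}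
  set Eoutside := {e ∈ H.edgeSet \ G.edgeSet | ∃ x ∈ e, x ∈ S}
  have hY : Dnum G u + inY.ncard ≤ EY.ncard + 1 := Dnum_add_ncard_merged_le hGH hH u
  have hout : outside.ncard ≤ Eoutside.ncard := ncard_not_isBlock_le hGH hH S
  have hsub : {c : G.ConnectedComponent | ¬IsBlock G c.supp} ⊆
      insert (G.connectedComponentMk u) (inY ∪ outside) := by
    intro c hc
    by_cases hcu : c = G.connectedComponentMk u
    · exact .inl hcu
    by_cases hcY : ∃ x, G.connectedComponentMk x = c ∧ H.Reachable u x
    · exact .inr (.inl ⟨hcu, hcY⟩)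
    · exact .inr (.inr ⟨fun x hx hux => hcY ⟨x, hx, hux⟩, hc⟩)
  have hC : Cnum G ≤ inY.ncard + outside.ncard + 1 :=
    calc Cnum G = {c : G.ConnectedComponent | ¬IsBlock G c.supp}.ncard := Nat.card_coe_set_eq _
      _ ≤ _ := (Set.ncard_le_ncard hsub).trans (Set.ncard_insert_le _ _)
      _ ≤ _ := by grw [Set.ncard_union_le]
  have hE : EY.ncard + Eoutside.ncard ≤ (H.edgeSet \ G.edgeSet).ncard := by
    have hdisj : Disjoint EY Eoutside := Set.disjoint_left.2 fun e he he' =>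
      have ⟨_, x, hx, hxS⟩ := he'
      hxS (he.2 x hx).1
    rw [← Set.ncard_union_eq hdisj]
    exact Set.ncard_le_ncard (Set.union_subset (Set.sep_subset _ _) (Set.sep_subset _ _))
  omega

end ComponentCount

section Biconnector

lemma reachable_of_forall_adj_hub {W : Type*} {K : SimpleGraph W} {A B : Set W} {a b : W}
    (hcov : ∀ z, z ∈ A ∨ z ∈ B) (ha : a ∈ A) (hA : ∀ z ∈ A, K.Adj z b) (hB : ∀ z ∈ B, K.Adj z a)
    (x y : W) : K.Reachable x y := by
  have hb : ∀ z, K.Reachable z b := fun z => (hcov z).elim (fun hz => (hA z hz).reachable)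
    fun hz => (hB z hz).reachable.trans (hA a ha).reachable
  exact (hb x).trans (hb y).symm

variable {A B : Set V}

lemma biconnPair_completeBipartite (hdisj : Disjoint A B) (hcov : A ∪ B = Set.univ)
    (hA : 2 ≤ A.ncard) (hB : 2 ≤ B.ncard) (x y : V) :
    BiconnPair (SimpleGraph.fromRel fun a b => a ∈ A ∧ b ∈ B) x y := by
  set K := SimpleGraph.fromRel fun a b => a ∈ A ∧ b ∈ B
  have hK : ∀ a ∈ A, ∀ b ∈ B, K.Adj a b :=
    fun a ha b hb => ⟨fun h => Set.disjoint_left.1 hdisj ha (h ▸ hb), .inl ⟨ha, hb⟩⟩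
  have hcov' : ∀ z, z ∈ A ∨ z ∈ B := fun z => (hcov.symm ▸ Set.mem_univ z : z ∈ A ∪ B)
  have hA' : ∀ v, ∃ a ∈ A, a ≠ v := Set.exists_ne_of_one_lt_ncard hA
  have hB' : ∀ v, ∃ b ∈ B, b ≠ v := Set.exists_ne_of_one_lt_ncard hB
  obtain ⟨a₀, ha₀, -⟩ := hA' x
  obtain ⟨b₀, hb₀, -⟩ := hB' x
  refine ⟨reachable_of_forall_adj_hub hcov' ha₀ (fun z hz => hK z hz b₀ hb₀)
    (fun z hz => (hK a₀ ha₀ z hz).symm) x y, fun e he => ?_, fun w hx hy => ?_⟩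
  · obtain ⟨p, hp, q, hq, rfl⟩ : ∃ p ∈ A, ∃ q ∈ B, e = s(p, q) := by
      induction e using Sym2.ind with | h p q =>
      rcases he.2 with ⟨hp, hq⟩ | ⟨hq, hp⟩
      exacts [⟨p, hp, q, hq, rfl⟩, ⟨q, hq, p, hp, Sym2.eq_swap⟩]
    obtain ⟨a, ha, hap⟩ := hA' p
    obtain ⟨b, hb, hbq⟩ := hB' q
    have hnot : ∀ z, s(z, b) ≠ s(p, q) ∧ s(z, a) ≠ s(p, q) := fun z => by
      have := Set.disjoint_left.1 hdisj
      constructor <;> intro h <;> rcases Sym2.eq_iff.1 h with ⟨rfl, rfl⟩ | ⟨rfl, rfl⟩ <;> tauto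
    refine reachable_of_forall_adj_hub (b := b) hcov' ha (fun z hz => ?_) (fun z hz => ?_) x y
    · exact deleteEdges_adj.2 ⟨hK z hz b hb, (hnot z).1⟩
    · exact deleteEdges_adj.2 ⟨(hK a ha z hz).symm, (hnot z).2⟩
  · obtain ⟨a, ha, haw⟩ := hA' w
    obtain ⟨b, hb, hbw⟩ := hB' w
    exact reachable_of_forall_adj_hub (K := K.induce {t | t ≠ w})
      (A := {t : {t : V | t ≠ w} | t.1 ∈ A}) (B := {t : {t : V | t ≠ w} | t.1 ∈ B})
      (a := ⟨a, haw⟩) (b := ⟨b, hbw⟩) (fun z => hcov' z) ha (fun z hz => hK z hz b hb)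
      (fun z hz => (hK a ha z hz).symm) _ _

theorem isBiconnector_legalEdges {G : SimpleGraph V} (hdisj : Disjoint A B)
    (hcov : A ∪ B = Set.univ) (hA : 2 ≤ A.ncard) (hB : 2 ≤ B.ncard) :
    IsBiconnector G A B {e | ∃ a b, e = s(a, b) ∧ LegalEdge G A B a b} := by
  refine ⟨fun e he => he, fun c => isBlock_supp_of_biconnSet fun x _ y _ =>
    (biconnPair_completeBipartite hdisj hcov hA hB x y).mono ?_⟩
  rintro x y ⟨hxy, hr⟩
  by_cases hG : G.Adj x y
  · exact .inl hG
  refine .inr ((fromEdgeSet_adj _).2 ⟨?_, hxy⟩)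
  rcases hr with ⟨hx, hy⟩ | ⟨hy, hx⟩
  exacts [⟨x, y, rfl, hx, hy, hG⟩, ⟨y, x, Sym2.eq_swap, hy, hx, fun h => hG h.symm⟩]

end Biconnector

lemma edgeSet_sup_fromEdgeSet_sdiff_subset (G : SimpleGraph V) (L : Set (Sym2 V)) :
    (G ⊔ fromEdgeSet L).edgeSet \ G.edgeSet ⊆ L := by
  rintro e ⟨he, hGe⟩
  rw [edgeSet_sup, edgeSet_fromEdgeSet] at he
  exact he.resolve_left hGe |>.1

theorem stmt_5_general [Fintype V] (G : SimpleGraph V) (A B : Set V)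
    (hdisj : Disjoint A B) (hcov : A ∪ B = Set.univ)
    (hA : 2 ≤ A.ncard) (hB : 2 ≤ B.ncard) :
    eta G A B ≤ Bnum G A B := by
  obtain ⟨L, ⟨hlegal, hH⟩, hcard⟩ : Bnum G A B ∈
      {k | ∃ L, IsBiconnector G A B L ∧ L.ncard = k} :=
    Nat.sInf_mem ⟨_, _, isBiconnector_legalEdges hdisj hcov hA hB, rfl⟩
  have hadded := edgeSet_sup_fromEdgeSet_sdiff_subset G L
  have hAB : ∀ e ∈ (G ⊔ fromEdgeSet L).edgeSet \ G.edgeSet, ∃ a ∈ A, ∃ b ∈ B, e = s(a, b) :=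
    fun e he => by
      obtain ⟨a, b, rfl, ha, hb, -⟩ := hlegal e (hadded he)
      exact ⟨a, ha, b, hb, rfl⟩
  have hF := Set.ncard_le_ncard hadded
  have hDC := Dnum_add_Cnum_le le_sup_left hH
  obtain ⟨a, -⟩ := Set.nonempty_of_ncard_ne_zero (by omega : A.ncard ≠ 0)
  have : Nonempty V := ⟨a⟩
  have hD : (⨆ u, Dnum G u) ≤ ((G ⊔ fromEdgeSet L).edgeSet \ G.edgeSet).ncard + 2 - Cnum G :=
    ciSup_le fun u => by have := hDC u; omega
  rw [← hcard]
  refine max_le ?_ ((maxMatching_add_Rnum_le le_sup_left hH hdisj hAB).trans hF)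
  have := hDC a
  omega

theorem stmt_5 [Fintype V] (G : SimpleGraph V) (A B : Set V)
    (hdisj : Disjoint A B) (hcov : A ∪ B = Set.univ)
    (hbip : ∀ u v : V, G.Adj u v → (u ∈ A ∧ v ∈ B) ∨ (u ∈ B ∧ v ∈ A))
    (hA : 2 ≤ A.ncard) (hB : 2 ≤ B.ncard) :
    eta G A B ≤ Bnum G A B :=
  stmt_5_general G A B hdisj hcov hA hB

end
end AugBic
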